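/- arXiv:2406.00338 — 4 statements merged into one kernel-verified Lean document; each statement's English description precedes it below -/
import Mathlib

section
/- Let X be a finite-dimensional real inner product space, Ξ : X → Q a linear map into a finite-dimensional inner product space Q with Q = range Ξ, and let A be a bilinear form on X that is nondegenerate on K := ker Ξ. Suppose the inf-sup constant β := inf_{0≠η∈Q} sup_{0≠x∈X} ⟨Ξ x, η⟩/(‖x‖‖η‖) is positive. Then for every λ larger than some threshold λ₀ depending only on the continuity constant of A, the nondegeneracy constant of A on K, and β, the bilinear form A_λ(x,y) := A(x,y) + λ⟨Ξ x, Ξ y⟩ is nondegenerate on X: for every linear functional G on X there is a unique x ∈ X with A_λ(x,y) = G(y) for all y ∈ X. -/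
open RealInnerProductSpace

/-- The penalty bilinear form `(x, y) ↦ ⟪Ξ x, Ξ y⟫`. -/
noncomputable def penForm {X Q : Type*}
    [NormedAddCommGroup X] [InnerProductSpace ℝ X]
    [NormedAddCommGroup Q] [InnerProductSpace ℝ Q] (Ξ : X →ₗ[ℝ] Q) :
    X →ₗ[ℝ] X →ₗ[ℝ] ℝ :=
  LinearMap.mk₂ ℝ (fun x y => ⟪Ξ x, Ξ y⟫)
    (fun x x' y => by simp [map_add, inner_add_left])
    (fun c x y => by simp [map_smul, real_inner_smul_left])
    (fun x y y' => by simp [map_add, inner_add_right])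
    (fun c x y => by simp [map_smul, real_inner_smul_right])

/-- Well-posedness of the penalized problem: for `λ` above a threshold depending
only on the continuity constant of `A`, its nondegeneracy on `ker Ξ`, and the
inf-sup constant `β` of `Ξ`, the form `A_λ(x,y) = A(x,y) + λ⟪Ξx,Ξy⟫` is
nondegenerate. -/
theorem stmt7 {X Q : Type*}
    [NormedAddCommGroup X] [InnerProductSpace ℝ X] [FiniteDimensional ℝ X]
    [NormedAddCommGroup Q] [InnerProductSpace ℝ Q] [FiniteDimensional ℝ Q]
    (Ξ : X →ₗ[ℝ] Q) (hsurj : LinearMap.range Ξ = ⊤)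
    (A : X →ₗ[ℝ] X →ₗ[ℝ] ℝ) (M β : ℝ) (hM : 0 < M) (hβ : 0 < β)
    (hbound : ∀ x y : X, |A x y| ≤ M * ‖x‖ * ‖y‖)
    (hnd₁ : ∀ u ∈ LinearMap.ker Ξ, (∀ v ∈ LinearMap.ker Ξ, A u v = 0) → u = 0)
    (hnd₂ : ∀ v ∈ LinearMap.ker Ξ, (∀ u ∈ LinearMap.ker Ξ, A u v = 0) → v = 0)
    (hβinfsup : ∀ η : Q, β * ‖η‖ ≤ ⨆ x : {x : X // x ≠ 0}, ⟪Ξ x.1, η⟫ / ‖x.1‖) :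
    ∃ lam₀ : ℝ, ∀ lam : ℝ, lam > lam₀ → ∀ G : X →ₗ[ℝ] ℝ,
      ∃! x : X, ∀ y : X, A x y + lam * ⟪Ξ x, Ξ y⟫ = G y := by
  classical
  -- Key step: injectivity of the penalized form for large `lam`.
  have key : ∃ lam₀ : ℝ, 0 < lam₀ ∧ ∀ lam : ℝ, lam > lam₀ → ∀ x : X,
      (∀ y : X, A x y + lam * ⟪Ξ x, Ξ y⟫ = 0) → x = 0 := by
    by_contra hcon
    push_neg at hcon
    have hcon' : ∀ n : ℕ, ∃ lam : ℝ, lam > (n + 1 : ℝ) ∧ ∃ x : X,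
        (∀ y : X, A x y + lam * ⟪Ξ x, Ξ y⟫ = 0) ∧ x ≠ 0 := by
      intro n
      obtain ⟨lam, hlam, x, hx, hx0⟩ := hcon ((n : ℝ) + 1) (by positivity)
      exact ⟨lam, hlam, x, hx, hx0⟩
    choose lam hlam x hx hx0 using hcon'
    set u : ℕ → X := fun n => ‖x n‖⁻¹ • x n with hu
    have hnu : ∀ n, ‖u n‖ = 1 := by
      intro n
      simp only [hu, norm_smul, norm_inv, norm_norm]
      exact inv_mul_cancel₀ (norm_ne_zero_iff.mpr (hx0 n))
    have hux : ∀ n, ∀ y : X, A (u n) y + lam n * ⟪Ξ (u n), Ξ y⟫ = 0 := by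
      intro n y
      have h0 := hx n y
      simp only [hu, map_smul, LinearMap.smul_apply, real_inner_smul_left, smul_eq_mul]
      calc ‖x n‖⁻¹ * A (x n) y + lam n * (‖x n‖⁻¹ * ⟪Ξ (x n), Ξ y⟫)
          = ‖x n‖⁻¹ * (A (x n) y + lam n * ⟪Ξ (x n), Ξ y⟫) := by ring
        _ = 0 := by rw [h0, mul_zero]
    -- bound on the constraint residual
    have hres : ∀ n, ‖Ξ (u n)‖ ^ 2 ≤ M / lam n := by
      intro n
      have hlampos : (0 : ℝ) < lam n := lt_trans (by positivity) (hlam n)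
      have h1 := hux n (u n)
      have h2 : lam n * ‖Ξ (u n)‖ ^ 2 = -A (u n) (u n) := by
        rw [← real_inner_self_eq_norm_sq]; linarith
      have h3 : -A (u n) (u n) ≤ M := by
        have := hbound (u n) (u n)
        rw [hnu n] at this
        have := neg_le_of_abs_le this
        linarith [this]
      rw [le_div_iff₀ hlampos, mul_comm]
      linarith [h2 ▸ h3]
    -- extract a convergent subsequence on the unit sphere
    have hsphere : ∀ n, u n ∈ Metric.sphere (0 : X) 1 := by
      intro n; simp [hnu n]
    obtain ⟨z, hz, φ, hφ, hconv⟩ :=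
      (isCompact_sphere (0 : X) 1).tendsto_subseq hsphere
    have hz1 : ‖z‖ = 1 := by simpa using hz
    have hzne : z ≠ 0 := by
      intro h; rw [h, norm_zero] at hz1; norm_num at hz1
    have hΞcont : Continuous Ξ := Ξ.continuous_of_finiteDimensional
    -- Ξ z = 0
    have hΞz : Ξ z = 0 := by
      have h1 : Filter.Tendsto (fun n => ‖Ξ (u (φ n))‖ ^ 2) Filter.atTop
          (nhds (‖Ξ z‖ ^ 2)) := by
        have : Filter.Tendsto (fun n => Ξ (u (φ n))) Filter.atTop (nhds (Ξ z)) :=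
          (hΞcont.tendsto z).comp hconv
        exact ((continuous_norm.tendsto _).comp this).pow 2
      have h2 : Filter.Tendsto (fun n => ‖Ξ (u (φ n))‖ ^ 2) Filter.atTop
          (nhds 0) := by
        refine squeeze_zero (f := fun n : ℕ => ‖Ξ (u (φ n))‖ ^ 2)
          (g := fun n : ℕ => M / ((n : ℝ) + 1))
          (fun n => by positivity) (fun n => ?_) ?_
        · 
          have h3 : ((n : ℝ) + 1) ≤ lam (φ n) := by
            have := hlam (φ n)
            have hφn : (n : ℝ) ≤ (φ n : ℝ) := Nat.cast_le.mpr (hφ.id_le n)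
            linarith
          refine le_trans (hres (φ n)) ?_
          exact div_le_div_of_nonneg_left hM.le (by positivity) h3
        · have : Filter.Tendsto (fun n : ℕ => ((n : ℝ) + 1)) Filter.atTop
              Filter.atTop := by
            exact Filter.tendsto_atTop_add_const_right _ 1 tendsto_natCast_atTop_atTop
          simpa using Filter.Tendsto.div_atTop tendsto_const_nhds this
      have := tendsto_nhds_unique h1 h2
      have : ‖Ξ z‖ = 0 := by
        have h4 : (0:ℝ) ≤ ‖Ξ z‖ := norm_nonneg _
        nlinarith [this]
      exact norm_eq_zero.mp this
    -- A z v = 0 for all v ∈ ker Ξ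
    have hAz : ∀ v ∈ LinearMap.ker Ξ, A z v = 0 := by
      intro v hv
      have hvz : Ξ v = 0 := hv
      have h1 : ∀ n, A (u (φ n)) v = 0 := by
        intro n
        have := hux (φ n) v
        rw [hvz, inner_zero_right, mul_zero, add_zero] at this
        exact this
      have hAcont : Continuous (fun w : X => A w v) :=
        (A.flip v).continuous_of_finiteDimensional
      have h2 : Filter.Tendsto (fun n => A (u (φ n)) v) Filter.atTop
          (nhds (A z v)) := (hAcont.tendsto z).comp hconv
      have h3 : Filter.Tendsto (fun n => A (u (φ n)) v) Filter.atTop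
          (nhds 0) := by simp only [h1]; exact tendsto_const_nhds
      exact tendsto_nhds_unique h2 h3
    exact hzne (hnd₁ z hΞz hAz)
  obtain ⟨lam₀, hlam₀pos, hkey⟩ := key
  refine ⟨lam₀, fun lam hlam G => ?_⟩
  -- the penalized form as a linear map into the dual
  set T : X →ₗ[ℝ] (X →ₗ[ℝ] ℝ) := A + lam • penForm Ξ with hT
  have hTapp : ∀ x y : X, T x y = A x y + lam * ⟪Ξ x, Ξ y⟫ := by
    intro x y
    simp [hT, penForm, LinearMap.mk₂_apply]
  have hTinj : Function.Injective T := by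
    rw [← LinearMap.ker_eq_bot, LinearMap.ker_eq_bot']
    intro x hx
    apply hkey lam hlam x
    intro y
    rw [← hTapp]
    rw [hx]
    rfl
  have hfin : Module.finrank ℝ X = Module.finrank ℝ (X →ₗ[ℝ] ℝ) :=
    (Subspace.dual_finrank_eq (K := ℝ) (V := X)).symm
  have hTsurj : Function.Surjective T :=
    (LinearMap.injective_iff_surjective_of_finrank_eq_finrank hfin).mp hTinj
  obtain ⟨x, hxG⟩ := hTsurj G
  refine ⟨x, fun y => by rw [← hTapp, hxG], ?_⟩
  intro x' hx'
  apply hTinj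
  rw [hxG]
  ext y
  rw [hTapp]
  exact hx' y
end

section
/- Let X, Q be finite-dimensional real inner product spaces, Ξ : X → Q linear with Q = range Ξ, and A a bounded bilinear form on X. Let (x*, q*) ∈ X × Q solve the mixed problem A(x*, y) + ⟨Ξ y, q*⟩ = F(y) for all y ∈ X and Ξ x* = 0. For λ > 0 define the iterated penalty iteration: given (u⁰) ∈ X, for n ≥ 0 let xⁿ ∈ X solve A(xⁿ, y) + λ⟨Ξ xⁿ, Ξ y⟩ = F(y) − ⟨Ξ uⁿ, Ξ y⟩ for all y ∈ X, and set uⁿ⁺¹ = uⁿ + λ xⁿ. Then for λ sufficiently large (λ > λ₀ with λ₀ depending only on the continuity constant of A, the inf-sup constant of A on ker Ξ, and the inf-sup constant of Ξ) the iterates are well-defined and converge geometrically: ‖xⁿ − x*‖ ≤ C r(λ)ⁿ ‖x⁰ − x*‖ with r(λ) = (8/9)·λ₀/(λ − λ₀) < 1 for λ > (17/8)λ₀. -/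
/-!
Write `e n = x n - xs` and `q n = qs - Ξ (u n)`. Subtracting the mixed problem from the penalised
one gives the error equation `A (e n) y + λ ⟪Ξ (e n), Ξ y⟫ = ⟪Ξ y, q n⟫`, and the update rule gives
`q (n + 1) = q n - λ Ξ (e n)`, so that `⟪Ξ y, q (n + 1)⟫ = A (e n) y`.

Since `A (e n)` annihilates `ker Ξ`, the inf-sup condition on `ker Ξ` bounds the kernel part of
`e n` by its orthogonal part, and the inf-sup condition for `Ξ` bounds that by `‖Ξ (e n)‖`; hence
`‖e n‖ ≤ c ‖Ξ (e n)‖` with `c = (1 + M/α)/β`. Testing the error equation with `e n` then gives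
`(λ - M c²) ‖Ξ (e n)‖ ≤ ‖q n‖`, while the inf-sup condition for `Ξ` gives `β ‖q (n + 1)‖ ≤ M ‖e n‖`.
So `‖q n‖` contracts by the factor `M c / β / (λ - M c²)`, which is at most `8/9 · λ₀/(λ - λ₀)`
because `M c²` and `M c / β` are both at most `4/5 · λ₀`.
-/

open RealInnerProductSpace

theorem le_of_le_iSup_div_norm {ι : Sort*} {E : Type*} [SeminormedAddCommGroup E] {v : ι → E}
    {f : ι → ℝ} {a c : ℝ} (ha : a ≤ ⨆ i, f i / ‖v i‖) (hc : 0 ≤ c)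
    (h : ∀ i, f i ≤ c * ‖v i‖) : a ≤ c :=
  ha.trans <| Real.iSup_le (fun i => div_le_of_le_mul₀ (norm_nonneg _) hc (h i)) hc

theorem le_mul_mul_pow_mul_of_contraction {a b : ℕ → ℝ} {K L r : ℝ} (hK : 0 ≤ K) (hr : 0 ≤ r)
    (hab : ∀ n, a n ≤ K * b n) (hb : ∀ n, b (n + 1) ≤ r * b n) (hb₀ : b 0 ≤ L * a 0) (n : ℕ) :
    a n ≤ K * L * r ^ n * a 0 :=
  calc a n ≤ K * b n := hab n
    _ ≤ K * (r ^ n * (L * a 0)) := by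
      gcongr
      exact (le_geom hr n fun k _ => hb k).trans (by gcongr)
    _ = K * L * r ^ n * a 0 := by ring

section InfSup

variable {X Q : Type*} [NormedAddCommGroup X] [InnerProductSpace ℝ X]
  [NormedAddCommGroup Q] [InnerProductSpace ℝ Q]

theorem mul_norm_le_of_forall_apply_eq_zero {A : X →ₗ[ℝ] X →ₗ[ℝ] ℝ} {K : Submodule ℝ X}
    {M α : ℝ} (hM : 0 ≤ M) (hbound : ∀ x y : X, |A x y| ≤ M * ‖x‖ * ‖y‖)
    (hαinfsup : ∀ u ∈ K, α * ‖u‖ ≤ ⨆ v : {v : X // v ∈ K ∧ v ≠ 0}, A u v.1 / ‖v.1‖)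
    {e k : X} (he : ∀ v ∈ K, A e v = 0) (hk : k ∈ K) : α * ‖k‖ ≤ M * ‖e - k‖ :=
  le_of_le_iSup_div_norm (hαinfsup k hk) (by positivity) fun v => by
    have hAk : A k v = -A (e - k) v := by simp [he v v.2.1]
    exact hAk ▸ (neg_le_abs _).trans (hbound _ _)

variable [FiniteDimensional ℝ X] [FiniteDimensional ℝ Q] {Ξ : X →ₗ[ℝ] Q} {β : ℝ}

theorem mul_norm_le_norm_adjoint
    (hβinfsup : ∀ η : Q, β * ‖η‖ ≤ ⨆ x : {x : X // x ≠ 0}, ⟪Ξ x.1, η⟫ / ‖x.1‖) (η : Q) :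
    β * ‖η‖ ≤ ‖Ξ.adjoint η‖ :=
  le_of_le_iSup_div_norm (hβinfsup η) (norm_nonneg _) fun y => by
    rw [real_inner_comm, ← LinearMap.adjoint_inner_left]
    exact real_inner_le_norm _ _

theorem mul_norm_le_norm_apply_of_mem_orthogonal_ker (hβ : 0 ≤ β)
    (hadj : ∀ η : Q, β * ‖η‖ ≤ ‖Ξ.adjoint η‖) {p : X} (hp : p ∈ (LinearMap.ker Ξ)ᗮ) :
    β * ‖p‖ ≤ ‖Ξ p‖ := by
  obtain ⟨η, rfl⟩ : p ∈ Ξ.adjoint.range := Ξ.orthogonal_ker ▸ hp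
  have hsq : ‖Ξ.adjoint η‖ ^ 2 ≤ ‖η‖ * ‖Ξ (Ξ.adjoint η)‖ := by
    rw [← real_inner_self_eq_norm_sq, LinearMap.adjoint_inner_left]
    exact real_inner_le_norm _ _
  rcases (norm_nonneg (Ξ.adjoint η)).eq_or_lt with h0 | hpos
  · rw [← h0, mul_zero]
    exact norm_nonneg _
  · nlinarith [hadj η, mul_le_mul_of_nonneg_right (hadj η) (norm_nonneg (Ξ (Ξ.adjoint η)))]

theorem norm_le_mul_norm_apply_of_forall_apply_ker_eq_zero {A : X →ₗ[ℝ] X →ₗ[ℝ] ℝ} {M α : ℝ}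
    (hM : 0 ≤ M) (hα : 0 < α) (hβ : 0 < β) (hbound : ∀ x y : X, |A x y| ≤ M * ‖x‖ * ‖y‖)
    (hαinfsup : ∀ u ∈ LinearMap.ker Ξ, α * ‖u‖ ≤
      ⨆ v : {v : X // v ∈ LinearMap.ker Ξ ∧ v ≠ 0}, A u v.1 / ‖v.1‖)
    (hβinfsup : ∀ η : Q, β * ‖η‖ ≤ ⨆ x : {x : X // x ≠ 0}, ⟪Ξ x.1, η⟫ / ‖x.1‖)
    {e : X} (he : ∀ v ∈ LinearMap.ker Ξ, A e v = 0) :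
    ‖e‖ ≤ (1 + M / α) / β * ‖Ξ e‖ := by
  set k := (LinearMap.ker Ξ).starProjection e
  have hk : k ∈ LinearMap.ker Ξ := (LinearMap.ker Ξ).starProjection_apply_mem e
  have hΞ : Ξ (e - k) = Ξ e := by rw [map_sub, LinearMap.mem_ker.mp hk, sub_zero]
  have hker := mul_norm_le_of_forall_apply_eq_zero hM hbound hαinfsup he hk
  have hperp := hΞ ▸ mul_norm_le_norm_apply_of_mem_orthogonal_ker hβ.le
    (mul_norm_le_norm_adjoint hβinfsup) ((LinearMap.ker Ξ).sub_starProjection_mem_orthogonal e)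
  have htri : ‖e‖ ≤ ‖k‖ + ‖e - k‖ := norm_le_norm_add_norm_sub' e k
  have hprod : α * β * ‖e‖ ≤ (α + M) * ‖Ξ e‖ := by
    nlinarith [mul_le_mul_of_nonneg_left htri (mul_nonneg hα.le hβ.le),
      mul_le_mul_of_nonneg_left hker hβ.le, mul_le_mul_of_nonneg_left hperp (by positivity)]
  calc ‖e‖ = α * β * ‖e‖ / (α * β) := by field_simp
    _ ≤ (α + M) * ‖Ξ e‖ / (α * β) := by gcongr
    _ = (1 + M / α) / β * ‖Ξ e‖ := by field_simp

end InfSup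

namespace IteratedPenalty

variable {X Q : Type*} [NormedAddCommGroup X] [InnerProductSpace ℝ X]
  [NormedAddCommGroup Q] [InnerProductSpace ℝ Q]
  {Ξ : X →ₗ[ℝ] Q} {A : X →ₗ[ℝ] X →ₗ[ℝ] ℝ} {M lam : ℝ} {e : X} {q : Q}

theorem error_eq {F : X →ₗ[ℝ] ℝ} {xs : X} {qs : Q} {x u : ℕ → X}
    (hmixed : ∀ y : X, A xs y + ⟪Ξ y, qs⟫ = F y) (hconstr : Ξ xs = 0)
    (hiter : ∀ n : ℕ, ∀ y : X, A (x n) y + lam * ⟪Ξ (x n), Ξ y⟫ = F y - ⟪Ξ (u n), Ξ y⟫)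
    (n : ℕ) (y : X) :
    A (x n - xs) y + lam * ⟪Ξ (x n - xs), Ξ y⟫ = ⟪Ξ y, qs - Ξ (u n)⟫ := by
  rw [map_sub, map_sub, hconstr, sub_zero, LinearMap.sub_apply, inner_sub_right]
  linarith [hiter n y, hmixed y, real_inner_comm (Ξ y) (Ξ (u n))]

theorem residual_succ_eq {xs : X} {qs : Q} {x u : ℕ → X} (hconstr : Ξ xs = 0)
    (hupdate : ∀ n : ℕ, u (n + 1) = u n + lam • x n) (n : ℕ) :
    qs - Ξ (u (n + 1)) = qs - Ξ (u n) - lam • Ξ (x n - xs) := by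
  rw [hupdate, map_add, map_smul, map_sub, hconstr, sub_zero, sub_add_eq_sub_sub]

theorem mul_norm_map_le (hM : 0 ≤ M) (hbound : ∀ x y : X, |A x y| ≤ M * ‖x‖ * ‖y‖) {c : ℝ}
    (hc : ‖e‖ ≤ c * ‖Ξ e‖) (herr : ∀ y, A e y + lam * ⟪Ξ e, Ξ y⟫ = ⟪Ξ y, q⟫) :
    (lam - M * c ^ 2) * ‖Ξ e‖ ≤ ‖q‖ := by
  have henergy := herr e
  rw [real_inner_self_eq_norm_sq] at henergy
  have hA : -A e e ≤ M * (c * ‖Ξ e‖) ^ 2 :=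
    calc -A e e ≤ M * ‖e‖ * ‖e‖ := (neg_le_abs _).trans (hbound e e)
      _ ≤ M * (c * ‖Ξ e‖) ^ 2 := by
        rw [mul_assoc, ← sq]
        exact mul_le_mul_of_nonneg_left (pow_le_pow_left₀ (norm_nonneg e) hc 2) hM
  have hq : ⟪Ξ e, q⟫ ≤ ‖Ξ e‖ * ‖q‖ := real_inner_le_norm _ _
  rcases (norm_nonneg (Ξ e)).eq_or_lt with h0 | hpos
  · rw [← h0, mul_zero]
    exact norm_nonneg _
  · refine le_of_mul_le_mul_right ?_ hpos
    nlinarith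

theorem norm_le_div_mul (hM : 0 ≤ M) (hbound : ∀ x y : X, |A x y| ≤ M * ‖x‖ * ‖y‖) {c : ℝ}
    (hc₀ : 0 ≤ c) (hD : 0 < lam - M * c ^ 2) (hc : ‖e‖ ≤ c * ‖Ξ e‖)
    (herr : ∀ y, A e y + lam * ⟪Ξ e, Ξ y⟫ = ⟪Ξ y, q⟫) :
    ‖e‖ ≤ c / (lam - M * c ^ 2) * ‖q‖ :=
  calc ‖e‖ ≤ c * ‖Ξ e‖ := hc
    _ ≤ c * (‖q‖ / (lam - M * c ^ 2)) := by
      gcongr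
      exact (le_div_iff₀' hD).2 (mul_norm_map_le hM hbound hc herr)
    _ = c / (lam - M * c ^ 2) * ‖q‖ := by ring

theorem mul_norm_sub_smul_le {β : ℝ}
    (hβinfsup : ∀ η : Q, β * ‖η‖ ≤ ⨆ x : {x : X // x ≠ 0}, ⟪Ξ x.1, η⟫ / ‖x.1‖)
    (hM : 0 ≤ M) (hbound : ∀ x y : X, |A x y| ≤ M * ‖x‖ * ‖y‖)
    (herr : ∀ y, A e y + lam * ⟪Ξ e, Ξ y⟫ = ⟪Ξ y, q⟫) :
    β * ‖q - lam • Ξ e‖ ≤ M * ‖e‖ :=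
  le_of_le_iSup_div_norm (hβinfsup _) (by positivity) fun y => by
    have : ⟪Ξ y, q - lam • Ξ e⟫ = A e y := by
      rw [inner_sub_right, real_inner_smul_right, ← herr, real_inner_comm (Ξ y)]
      ring
    exact this ▸ (le_abs_self _).trans (hbound _ _)

theorem norm_sub_smul_le {β c : ℝ}
    (hβinfsup : ∀ η : Q, β * ‖η‖ ≤ ⨆ x : {x : X // x ≠ 0}, ⟪Ξ x.1, η⟫ / ‖x.1‖) (hβ : 0 < β)
    (hM : 0 ≤ M) (hbound : ∀ x y : X, |A x y| ≤ M * ‖x‖ * ‖y‖) (hc₀ : 0 ≤ c)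
    (hD : 0 < lam - M * c ^ 2) (hc : ‖e‖ ≤ c * ‖Ξ e‖)
    (herr : ∀ y, A e y + lam * ⟪Ξ e, Ξ y⟫ = ⟪Ξ y, q⟫) :
    ‖q - lam • Ξ e‖ ≤ M * c / β / (lam - M * c ^ 2) * ‖q‖ :=
  calc ‖q - lam • Ξ e‖ ≤ M / β * ‖e‖ := by
        rw [div_mul_eq_mul_div, le_div_iff₀' hβ]
        exact mul_norm_sub_smul_le hβinfsup hM hbound herr
    _ ≤ M / β * (c / (lam - M * c ^ 2) * ‖q‖) := by
        gcongr
        exact norm_le_div_mul hM hbound hc₀ hD hc herr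
    _ = M * c / β / (lam - M * c ^ 2) * ‖q‖ := by ring

theorem norm_le_of_error_eq [FiniteDimensional ℝ X] {β : ℝ}
    (hβinfsup : ∀ η : Q, β * ‖η‖ ≤ ⨆ x : {x : X // x ≠ 0}, ⟪Ξ x.1, η⟫ / ‖x.1‖) (hβ : 0 < β)
    (hM : 0 ≤ M) (hbound : ∀ x y : X, |A x y| ≤ M * ‖x‖ * ‖y‖) (hlam : 0 ≤ lam)
    (herr : ∀ y, A e y + lam * ⟪Ξ e, Ξ y⟫ = ⟪Ξ y, q⟫) :
    ‖q‖ ≤ (M / β + lam * ‖Ξ.toContinuousLinearMap‖) * ‖e‖ :=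
  calc ‖q‖ = ‖(q - lam • Ξ e) + lam • Ξ e‖ := by rw [sub_add_cancel]
    _ ≤ ‖q - lam • Ξ e‖ + lam * ‖Ξ e‖ :=
        (norm_add_le _ _).trans_eq (by rw [norm_smul, Real.norm_of_nonneg hlam])
    _ ≤ M / β * ‖e‖ + lam * (‖Ξ.toContinuousLinearMap‖ * ‖e‖) := by
        gcongr
        · rw [div_mul_eq_mul_div, le_div_iff₀' hβ]
          exact mul_norm_sub_smul_le hβinfsup hM hbound herr
        · exact Ξ.toContinuousLinearMap.le_opNorm e
    _ = (M / β + lam * ‖Ξ.toContinuousLinearMap‖) * ‖e‖ := by ring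

theorem rate_mem_Ico {lam₀ lam : ℝ} (h₀ : 0 < lam₀) (hlam : lam > 17 / 8 * lam₀) :
    8 / 9 * (lam₀ / (lam - lam₀)) ∈ Set.Ico 0 1 := by
  have hD : 0 < lam - lam₀ := by linarith
  refine ⟨by positivity, ?_⟩
  rw [← mul_div_assoc, div_lt_one hD]
  linarith

theorem div_sub_le_rate {s t lam₀ lam : ℝ} (h₀ : 0 < lam₀) (hlam : lam > 17 / 8 * lam₀)
    (hs : s ≤ 4 / 5 * lam₀) (ht : t ≤ 4 / 5 * lam₀) :
    t / (lam - s) ≤ 8 / 9 * (lam₀ / (lam - lam₀)) := by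
  rw [div_le_iff₀ (by linarith), ← mul_div_assoc, div_mul_eq_mul_div, le_div_iff₀ (by linarith)]
  nlinarith

theorem le_four_fifths_lam₀ {M α β lam₀ : ℝ} (hM : 0 ≤ M) (hα : 0 < α) (hβ : 0 < β)
    (hlam₀ : lam₀ = 5 * M / (4 * β ^ 2) * (1 + 2 * M / α) ^ 2) :
    M * ((1 + M / α) / β) ^ 2 ≤ 4 / 5 * lam₀ ∧ M * ((1 + M / α) / β) / β ≤ 4 / 5 * lam₀ := by
  have ha : 0 ≤ M / α := by positivity
  have hlam₀' : 4 / 5 * lam₀ = M * (1 + 2 * (M / α)) ^ 2 / β ^ 2 := by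
    rw [hlam₀]
    field_simp
  rw [hlam₀', div_pow, ← mul_div_assoc, show M * ((1 + M / α) / β) / β = M * (1 + M / α) / β ^ 2
    by ring]
  constructor <;> gcongr <;> nlinarith

end IteratedPenalty

theorem stmt8_general {X Q : Type*}
    [NormedAddCommGroup X] [InnerProductSpace ℝ X] [FiniteDimensional ℝ X]
    [NormedAddCommGroup Q] [InnerProductSpace ℝ Q] [FiniteDimensional ℝ Q]
    (Ξ : X →ₗ[ℝ] Q)
    (A : X →ₗ[ℝ] X →ₗ[ℝ] ℝ) (M α β : ℝ) (hM : 0 < M) (hα : 0 < α) (hβ : 0 < β)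
    (hbound : ∀ x y : X, |A x y| ≤ M * ‖x‖ * ‖y‖)
    (hαinfsup : ∀ u ∈ LinearMap.ker Ξ, α * ‖u‖ ≤
      ⨆ v : {v : X // v ∈ LinearMap.ker Ξ ∧ v ≠ 0}, A u v.1 / ‖v.1‖)
    (hβinfsup : ∀ η : Q, β * ‖η‖ ≤ ⨆ x : {x : X // x ≠ 0}, ⟪Ξ x.1, η⟫ / ‖x.1‖)
    (lam₀ : ℝ) (hlam₀ : lam₀ = 5 * M / (4 * β ^ 2) * (1 + 2 * M / α) ^ 2)
    (F : X →ₗ[ℝ] ℝ) (xs : X) (qs : Q)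
    (hmixed : ∀ y : X, A xs y + ⟪Ξ y, qs⟫ = F y) (hconstr : Ξ xs = 0)
    (lam : ℝ) (hlam : lam > 17 / 8 * lam₀)
    (x u : ℕ → X)
    (hiter : ∀ n : ℕ, ∀ y : X,
      A (x n) y + lam * ⟪Ξ (x n), Ξ y⟫ = F y - ⟪Ξ (u n), Ξ y⟫)
    (hupdate : ∀ n : ℕ, u (n + 1) = u n + lam • x n) :
    (8 / 9 * (lam₀ / (lam - lam₀)) < 1) ∧
    ∃ C > (0 : ℝ), ∀ n : ℕ,
      ‖x n - xs‖ ≤ C * (8 / 9 * (lam₀ / (lam - lam₀))) ^ n * ‖x 0 - xs‖ := by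
  open IteratedPenalty in
  have hlam₀pos : 0 < lam₀ := by rw [hlam₀]; positivity
  obtain ⟨hr₀, hr₁⟩ := rate_mem_Ico hlam₀pos hlam
  obtain ⟨hMc, hMcβ⟩ := le_four_fifths_lam₀ hM.le hα hβ hlam₀
  set c := (1 + M / α) / β
  have hD : 0 < lam - M * c ^ 2 := by linarith
  set e : ℕ → X := fun n => x n - xs
  set q : ℕ → Q := fun n => qs - Ξ (u n)
  have herr : ∀ n y, A (e n) y + lam * ⟪Ξ (e n), Ξ y⟫ = ⟪Ξ y, q n⟫ :=
    error_eq hmixed hconstr hiter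
  have hcoer : ∀ n, ‖e n‖ ≤ c * ‖Ξ (e n)‖ := fun n =>
    norm_le_mul_norm_apply_of_forall_apply_ker_eq_zero hM.le hα hβ hbound hαinfsup hβinfsup
      fun v hv => by simpa [LinearMap.mem_ker.mp hv] using herr n v
  have hcontr : ∀ n, ‖q (n + 1)‖ ≤ 8 / 9 * (lam₀ / (lam - lam₀)) * ‖q n‖ := fun n => by
    rw [show q (n + 1) = q n - lam • Ξ (e n) from residual_succ_eq hconstr hupdate n]
    refine (norm_sub_smul_le hβinfsup hβ hM.le hbound (by positivity) hD (hcoer n)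
      (herr n)).trans ?_
    gcongr
    exact div_sub_le_rate hlam₀pos hlam hMc hMcβ
  have hlam_pos : 0 < lam := by linarith
  exact ⟨hr₁, _, mul_pos (div_pos (by positivity) hD) (by positivity),
    le_mul_mul_pow_mul_of_contraction (div_pos (by positivity) hD).le hr₀
      (fun n => norm_le_div_mul hM.le hbound (by positivity) hD (hcoer n) (herr n)) hcontr
      (norm_le_of_error_eq hβinfsup hβ hM.le hbound hlam_pos.le (herr 0))⟩

/-- Geometric convergence of the iterated penalty method for the mixed problem. -/
theorem stmt8 {X Q : Type*}
    [NormedAddCommGroup X] [InnerProductSpace ℝ X] [FiniteDimensional ℝ X]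
    [NormedAddCommGroup Q] [InnerProductSpace ℝ Q] [FiniteDimensional ℝ Q]
    (Ξ : X →ₗ[ℝ] Q) (hsurj : LinearMap.range Ξ = ⊤)
    (A : X →ₗ[ℝ] X →ₗ[ℝ] ℝ) (M α β : ℝ) (hM : 0 < M) (hα : 0 < α) (hβ : 0 < β)
    (hbound : ∀ x y : X, |A x y| ≤ M * ‖x‖ * ‖y‖)
    (hαinfsup : ∀ u ∈ LinearMap.ker Ξ, α * ‖u‖ ≤
      ⨆ v : {v : X // v ∈ LinearMap.ker Ξ ∧ v ≠ 0}, A u v.1 / ‖v.1‖)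
    (hβinfsup : ∀ η : Q, β * ‖η‖ ≤ ⨆ x : {x : X // x ≠ 0}, ⟪Ξ x.1, η⟫ / ‖x.1‖)
    (lam₀ : ℝ) (hlam₀ : lam₀ = 5 * M / (4 * β ^ 2) * (1 + 2 * M / α) ^ 2)
    (F : X →ₗ[ℝ] ℝ) (xs : X) (qs : Q)
    (hmixed : ∀ y : X, A xs y + ⟪Ξ y, qs⟫ = F y) (hconstr : Ξ xs = 0)
    (lam : ℝ) (hlam : lam > 17 / 8 * lam₀)
    (x u : ℕ → X)
    (hiter : ∀ n : ℕ, ∀ y : X,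
      A (x n) y + lam * ⟪Ξ (x n), Ξ y⟫ = F y - ⟪Ξ (u n), Ξ y⟫)
    (hupdate : ∀ n : ℕ, u (n + 1) = u n + lam • x n) :
    (8 / 9 * (lam₀ / (lam - lam₀)) < 1) ∧
    ∃ C > (0 : ℝ), ∀ n : ℕ,
      ‖x n - xs‖ ≤ C * (8 / 9 * (lam₀ / (lam - lam₀))) ^ n * ‖x 0 - xs‖ :=
  stmt8_general Ξ A M α β hM hα hβ hbound hαinfsup hβinfsup lam₀ hlam₀ F xs qs hmixed hconstr lam
    hlam x u hiter hupdate
end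

section
/- Let X, Q be finite-dimensional real inner product spaces, Ξ : X → Q linear and surjective with inf-sup constant β > 0 (i.e., sup_{0≠x} ⟨Ξx,η⟩/‖x‖ ≥ β‖η‖ for all η ∈ Q), let A be a bilinear form on X bounded by M, with inf-sup constant α > 0 on K = ker Ξ. Then every x ∈ K° := {x : A(x,k)=0 ∀k∈K} satisfies ‖x‖ ≤ β⁻¹(1 + 2M/α)‖Ξ x‖. -/
/-!
Split `x = x_K + x_⊥` orthogonally along `K = ker Ξ`. Since `Kᗮ = range Ξ*`, we have `x_⊥ = Ξ* η`,
and testing the inf-sup condition of `Ξ` at `η` gives `‖x_⊥‖ ≤ β⁻¹ ‖Ξ x‖`. As `A x` vanishes on `K`,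
`A x_K = -A x_⊥` on `K`, so the inf-sup condition of `A` on `K` gives `α ‖x_K‖ ≤ M ‖x_⊥‖`.
-/

open RealInnerProductSpace

section NormedAddCommGroup

variable {X : Type*} [NormedAddCommGroup X]

theorem iSup_div_norm_le {p : X → Prop} (f : X → ℝ) {C : ℝ} (hC : 0 ≤ C)
    (hf : ∀ v, p v → f v ≤ C * ‖v‖) : ⨆ v : {v : X // p v}, f v.1 / ‖v.1‖ ≤ C :=
  Real.iSup_le (fun v => div_le_of_le_mul₀ (norm_nonneg _) hC (hf v.1 v.2)) hC

theorem nonneg_of_abs_le_mul_norm_mul_norm {A : X → X → ℝ} {M : ℝ}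
    (hbound : ∀ x y, |A x y| ≤ M * ‖x‖ * ‖y‖) {x : X} (hx : x ≠ 0) : 0 ≤ M := by
  have hpos : 0 < ‖x‖ * ‖x‖ := by positivity
  have := (abs_nonneg (A x x)).trans (hbound x x)
  rw [mul_assoc] at this
  exact nonneg_of_mul_nonneg_left this hpos

variable [Module ℝ X]

theorem mul_norm_le_of_apply_eq_zero_on {K : Submodule ℝ X} {A : X →ₗ[ℝ] X →ₗ[ℝ] ℝ} {M α : ℝ}
    (hM : 0 ≤ M) (hbound : ∀ x y : X, |A x y| ≤ M * ‖x‖ * ‖y‖)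
    (hαinfsup : ∀ u ∈ K, α * ‖u‖ ≤ ⨆ v : {v : X // v ∈ K ∧ v ≠ 0}, A u v.1 / ‖v.1‖)
    {x : X} (hx : ∀ k ∈ K, A x k = 0) {k : X} (hk : k ∈ K) : α * ‖k‖ ≤ M * ‖x - k‖ := by
  refine (hαinfsup k hk).trans (iSup_div_norm_le _ (by positivity) fun v hv => ?_)
  have hAk : A k v = -A (x - k) v := by
    rw [map_sub, LinearMap.sub_apply, hx v hv.1]
    ring
  calc A k v = -A (x - k) v := hAk
    _ ≤ |A (x - k) v| := neg_le_abs _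
    _ ≤ M * ‖x - k‖ * ‖v‖ := hbound _ _

end NormedAddCommGroup

section InnerProductSpace

variable {X Q : Type*}
  [NormedAddCommGroup X] [InnerProductSpace ℝ X] [FiniteDimensional ℝ X]
  [NormedAddCommGroup Q] [InnerProductSpace ℝ Q] [FiniteDimensional ℝ Q]

theorem norm_le_of_mem_range_adjoint {Ξ : X →ₗ[ℝ] Q} {β : ℝ} (hβ : 0 < β)
    (hβinfsup : ∀ η : Q, β * ‖η‖ ≤ ⨆ x : {x : X // x ≠ 0}, ⟪Ξ x.1, η⟫ / ‖x.1‖)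
    {y : X} (hy : y ∈ LinearMap.range Ξ.adjoint) : ‖y‖ ≤ β⁻¹ * ‖Ξ y‖ := by
  obtain ⟨η, rfl⟩ := hy
  have hη : β * ‖η‖ ≤ ‖Ξ.adjoint η‖ :=
    (hβinfsup η).trans <| iSup_div_norm_le (fun v => ⟪Ξ v, η⟫) (norm_nonneg _) fun v _ => by
      rw [← LinearMap.adjoint_inner_right]
      exact (real_inner_le_norm _ _).trans_eq (mul_comm _ _)
  have hsq : ‖Ξ.adjoint η‖ ^ 2 ≤ ‖η‖ * ‖Ξ (Ξ.adjoint η)‖ := by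
    rw [← real_inner_self_eq_norm_sq, LinearMap.adjoint_inner_left]
    exact real_inner_le_norm _ _
  rw [inv_mul_eq_div, le_div_iff₀' hβ]
  rcases (norm_nonneg (Ξ.adjoint η)).eq_or_lt with h0 | hpos
  · rw [← h0, mul_zero]
    exact norm_nonneg _
  refine le_of_mul_le_mul_left ?_ hpos
  calc ‖Ξ.adjoint η‖ * (β * ‖Ξ.adjoint η‖) = β * ‖Ξ.adjoint η‖ ^ 2 := by ring
    _ ≤ β * (‖η‖ * ‖Ξ (Ξ.adjoint η)‖) := by gcongr
    _ = β * ‖η‖ * ‖Ξ (Ξ.adjoint η)‖ := by ring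
    _ ≤ ‖Ξ.adjoint η‖ * ‖Ξ (Ξ.adjoint η)‖ := by gcongr

end InnerProductSpace

theorem stmt9_general {X Q : Type*}
    [NormedAddCommGroup X] [InnerProductSpace ℝ X] [FiniteDimensional ℝ X]
    [NormedAddCommGroup Q] [InnerProductSpace ℝ Q] [FiniteDimensional ℝ Q]
    (Ξ : X →ₗ[ℝ] Q)
    (A : X →ₗ[ℝ] X →ₗ[ℝ] ℝ) (M α β : ℝ) (hα : 0 < α) (hβ : 0 < β)
    (hbound : ∀ x y : X, |A x y| ≤ M * ‖x‖ * ‖y‖)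
    (hαinfsup : ∀ u ∈ LinearMap.ker Ξ, α * ‖u‖ ≤
      ⨆ v : {v : X // v ∈ LinearMap.ker Ξ ∧ v ≠ 0}, A u v.1 / ‖v.1‖)
    (hβinfsup : ∀ η : Q, β * ‖η‖ ≤ ⨆ x : {x : X // x ≠ 0}, ⟪Ξ x.1, η⟫ / ‖x.1‖) :
    ∀ x : X, (∀ k ∈ LinearMap.ker Ξ, A x k = 0) →
      ‖x‖ ≤ β⁻¹ * (1 + 2 * M / α) * ‖Ξ x‖ := by
  intro x hx
  rcases eq_or_ne x 0 with rfl | hx0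
  · simp
  have hM : 0 ≤ M := nonneg_of_abs_le_mul_norm_mul_norm hbound hx0
  set xK := (LinearMap.ker Ξ).starProjection x
  have hxK : xK ∈ LinearMap.ker Ξ := Submodule.starProjection_apply_mem _ x
  have hperp : x - xK ∈ LinearMap.range Ξ.adjoint :=
    Ξ.orthogonal_ker ▸ Submodule.sub_starProjection_mem_orthogonal x
  have hΞ : Ξ (x - xK) = Ξ x := by rw [map_sub, LinearMap.mem_ker.mp hxK, sub_zero]
  have hperp_le : ‖x - xK‖ ≤ β⁻¹ * ‖Ξ x‖ := hΞ ▸ norm_le_of_mem_range_adjoint hβ hβinfsup hperp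
  have hK_le : ‖xK‖ ≤ M / α * ‖x - xK‖ := by
    rw [div_mul_eq_mul_div, le_div_iff₀' hα]
    exact mul_norm_le_of_apply_eq_zero_on hM hbound hαinfsup hx hxK
  calc ‖x‖ ≤ ‖xK‖ + ‖x - xK‖ := norm_le_norm_add_norm_sub' x xK
    _ ≤ (1 + 2 * M / α) * ‖x - xK‖ := by
      have : M / α ≤ 2 * M / α := by gcongr; linarith
      nlinarith [norm_nonneg (x - xK)]
    _ ≤ (1 + 2 * M / α) * (β⁻¹ * ‖Ξ x‖) := by gcongr
    _ = β⁻¹ * (1 + 2 * M / α) * ‖Ξ x‖ := by ring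

/-- Quantitative estimate for elements of the A-polar complement of `ker Ξ`:
they are controlled by the norm of their constraint residual. -/
theorem stmt9 {X Q : Type*}
    [NormedAddCommGroup X] [InnerProductSpace ℝ X] [FiniteDimensional ℝ X]
    [NormedAddCommGroup Q] [InnerProductSpace ℝ Q] [FiniteDimensional ℝ Q]
    (Ξ : X →ₗ[ℝ] Q) (hsurj : LinearMap.range Ξ = ⊤)
    (A : X →ₗ[ℝ] X →ₗ[ℝ] ℝ) (M α β : ℝ) (hM : 0 < M) (hα : 0 < α) (hβ : 0 < β)
    (hbound : ∀ x y : X, |A x y| ≤ M * ‖x‖ * ‖y‖)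
    (hαinfsup : ∀ u ∈ LinearMap.ker Ξ, α * ‖u‖ ≤
      ⨆ v : {v : X // v ∈ LinearMap.ker Ξ ∧ v ≠ 0}, A u v.1 / ‖v.1‖)
    (hβinfsup : ∀ η : Q, β * ‖η‖ ≤ ⨆ x : {x : X // x ≠ 0}, ⟪Ξ x.1, η⟫ / ‖x.1‖) :
    ∀ x : X, (∀ k ∈ LinearMap.ker Ξ, A x k = 0) →
      ‖x‖ ≤ β⁻¹ * (1 + 2 * M / α) * ‖Ξ x‖ :=
  stmt9_general Ξ A M α β hα hβ hbound hαinfsup hβinfsup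
end

section
/- Let H be a real inner product space, a and m symmetric positive semidefinite bilinear forms on H with m an inner product, and Δt > 0. Consider the Newmark iteration with parameters δ = 1/2 and β = 1/4: given (w₀, v₀, a₀), define for n ≥ 1: ŵ = w_{n−1} + Δt·v_{n−1} + (1/4)(Δt)²·a_{n−1}; a_n satisfies m(a_n, φ) + (1/4)(Δt)² a(a_n, φ) = −a(ŵ, φ) for all φ ∈ H; w_n = ŵ + (1/4)(Δt)² a_n; v_n = v_{n−1} + (Δt/2)(a_{n−1} + a_n). If additionally m(a₀, φ) = −a(w₀, φ) for all φ, then the energy E_n := (1/2) m(v_n, v_n) + (1/2) a(w_n, w_n) satisfies E_n = E₀ for all n ≥ 0. -/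
private lemma biquad {H : Type*} [AddCommGroup H] [Module ℝ H]
    (b : H →ₗ[ℝ] H →ₗ[ℝ] ℝ) (hs : ∀ x y : H, b x y = b y x) (x y : H) :
    b x x - b y y = b (y + x) (x - y) := by
  simp only [map_add, map_sub, LinearMap.add_apply, LinearMap.sub_apply]
  have := hs x y
  linarith

/-- Exact energy conservation of the average-acceleration Newmark scheme
(δ = 1/2, β = 1/4). -/
theorem stmt11 {H : Type*} [AddCommGroup H] [Module ℝ H]
    (a m : H →ₗ[ℝ] H →ₗ[ℝ] ℝ)
    (hasymm : ∀ x y : H, a x y = a y x) (hmsymm : ∀ x y : H, m x y = m y x)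
    (hapsd : ∀ x : H, 0 ≤ a x x) (hmpos : ∀ x : H, x ≠ 0 → 0 < m x x)
    (Δt : ℝ) (hΔt : 0 < Δt)
    (w v acc : ℕ → H)
    (hinit : ∀ φ : H, m (acc 0) φ = - a (w 0) φ)
    (hacc : ∀ n : ℕ, ∀ φ : H,
      m (acc (n + 1)) φ + (1 / 4) * Δt ^ 2 * a (acc (n + 1)) φ =
        - a (w n + Δt • v n + ((1 / 4) * Δt ^ 2) • acc n) φ)
    (hw : ∀ n : ℕ, w (n + 1) =
      w n + Δt • v n + ((1 / 4) * Δt ^ 2) • acc n + ((1 / 4) * Δt ^ 2) • acc (n + 1))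
    (hv : ∀ n : ℕ, v (n + 1) = v n + (Δt / 2) • (acc n + acc (n + 1))) :
    ∀ n : ℕ, (1 / 2) * m (v n) (v n) + (1 / 2) * a (w n) (w n) =
      (1 / 2) * m (v 0) (v 0) + (1 / 2) * a (w 0) (w 0) := by
  have key : ∀ k : ℕ, ∀ φ : H, m (acc k) φ = - a (w k) φ := by
    intro k
    induction k with
    | zero => exact hinit
    | succ k ih =>
      intro φ
      have h1 := hacc k φ
      rw [hw k]
      simp only [map_add, map_smul, LinearMap.add_apply, LinearMap.smul_apply,
        smul_eq_mul] at h1 ⊢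
      linarith
  intro n
  induction n with
  | zero => rfl
  | succ n ih =>
    have hmdiff : m (v (n+1)) (v (n+1)) - m (v n) (v n)
        = (Δt/2) * m (v n + v (n+1)) (acc n + acc (n+1)) := by
      rw [biquad m hmsymm (v (n+1)) (v n)]
      have hx : v (n+1) - v n = (Δt/2) • (acc n + acc (n+1)) := by
        rw [hv n]; module
      rw [hx, map_smul, smul_eq_mul]
    have hadiff : a (w (n+1)) (w (n+1)) - a (w n) (w n)
        = (Δt/2) * a (w n + w (n+1)) (v n + v (n+1)) := by
      rw [biquad a hasymm (w (n+1)) (w n)]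
      have hx : w (n+1) - w n = (Δt/2) • (v n + v (n+1)) := by
        rw [hv n, hw n]; module
      rw [hx, map_smul, smul_eq_mul]
    have hms : m (v n + v (n+1)) (acc n + acc (n+1))
        = - a (w n + w (n+1)) (v n + v (n+1)) := by
      have h1 := key n (v n + v (n+1))
      have h2 := key (n+1) (v n + v (n+1))
      have hsym := hmsymm (v n + v (n+1)) (acc n + acc (n+1))
      simp only [map_add, LinearMap.add_apply] at h1 h2 hsym ⊢
      linarith
    linear_combination (1/2) * hmdiff + (1/2) * hadiff + ih + (Δt/4) * hms
end
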